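/- Every pure state |ψ⟩ ∈ (ℂ²)^⊗(m+n) can be written as |ψ⟩ = Σ_{j=0}^{2^m−1} √p_j |j⟩ ⊗ |ψ_j⟩ for some probability distribution (p_j) and unit vectors |ψ_j⟩ ∈ (ℂ²)^⊗n, and consequently |ψ⟩ = W|0⟩^⊗(m+n) for some W of the LCQNN form W = (Π_j C-U_j)(V ⊗ I) with suitable unitaries V on (ℂ²)^⊗m and U_j on (ℂ²)^⊗n. -/

import Mathlib

/-!
Take `p j` to be the squared norm of the `j`-th control slice of `ψ` and `ψj j` that slice
normalised (a basis vector when the slice vanishes). Extending a unit vector to an orthonormal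
basis makes it the first column of a unitary; let `V` have first column `(√(p j))_j` and `U j`
first column `ψj j`. The controlled gates multiply to `blockDiagonal U`, so the circuit sends
`|0⟩` to the vector with `(a, j)`-entry `U j a 0 * V j 0 = √(p j) * ψj j a`.
-/

open Matrix Finset
open scoped Kronecker

theorem List.prod_ofFn_mulSingle {M : Type*} [Monoid M] {N : ℕ} (x : Fin N → M) :
    (List.ofFn fun j => (Pi.mulSingle j (x j) : Fin N → M)).prod = x := by
  convert Finset.noncommProd_mulSingle x using 1
  simp only [Finset.noncommProd, Fin.univ_val_map, Multiset.noncommProd_coe]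

namespace Matrix

variable {ι κ R : Type*} [Fintype ι] [DecidableEq ι] [Semiring R]

theorem prod_ofFn_blockDiagonal_mulSingle {N : ℕ} (U : Fin N → Matrix ι ι R) :
    (List.ofFn fun j => blockDiagonal (Pi.mulSingle j (U j))).prod = blockDiagonal U := by
  have := map_list_prod (blockDiagonalRingHom ι (Fin N) R)
    (List.ofFn fun j => Pi.mulSingle j (U j))
  rw [List.prod_ofFn_mulSingle, List.map_ofFn] at this
  exact this.symm

theorem exists_mem_unitaryGroup_col_eq {𝕜 : Type*} [RCLike 𝕜] (i₀ : ι) (v : ι → 𝕜)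
    (hv : ∑ i, ‖v i‖ ^ 2 = 1) : ∃ A ∈ unitaryGroup ι 𝕜, A.col i₀ = v := by
  let v' : EuclideanSpace 𝕜 ι := WithLp.toLp 2 v
  have hv' : ‖v'‖ = 1 := by
    rw [EuclideanSpace.norm_eq, show ∑ i, ‖v' i‖ ^ 2 = 1 from hv, Real.sqrt_one]
  have horth : Orthonormal 𝕜 (({i₀} : Set ι).domRestrict fun _ => v') :=
    ⟨fun _ => hv', fun i j hij => (hij (Subtype.ext (i.2.trans j.2.symm))).elim⟩
  obtain ⟨b, hb⟩ := horth.exists_orthonormalBasis_extension_of_card_eq (by simp)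
  refine ⟨(EuclideanSpace.basisFun ι 𝕜).toBasis.toMatrix b,
    (EuclideanSpace.basisFun ι 𝕜).toMatrix_orthonormalBasis_mem_unitary b, funext fun i => ?_⟩
  rw [col_apply, Module.Basis.toMatrix_apply, hb i₀ rfl, OrthonormalBasis.coe_toBasis_repr_apply,
    EuclideanSpace.basisFun_repr]

theorem blockDiagonal_mul_one_kronecker_mulVec_single [Fintype κ] [DecidableEq κ]
    (U : κ → Matrix ι ι R) (V : Matrix κ κ R) (a₀ : ι) (j₀ : κ) :
    (blockDiagonal U * ((1 : Matrix ι ι R) ⊗ₖ V)) *ᵥ Pi.single (a₀, j₀) 1 =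
      fun x => U x.2 x.1 a₀ * V x.2 j₀ := by
  funext ⟨a, j⟩
  simp [mul_apply, Fintype.sum_prod_type, blockDiagonal_apply, kroneckerMap_apply, one_apply]

end Matrix

section Normalize

variable {α : Type*} [Fintype α] [DecidableEq α]

noncomputable def normalizeOrSingle (a₀ : α) (φ : α → ℂ) : α → ℂ :=
  if ∑ a, ‖φ a‖ ^ 2 = 0 then Pi.single a₀ 1 else (√(∑ a, ‖φ a‖ ^ 2) : ℂ)⁻¹ • φ

theorem sum_norm_sq_normalizeOrSingle (a₀ : α) (φ : α → ℂ) :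
    ∑ a, ‖normalizeOrSingle a₀ φ a‖ ^ 2 = 1 := by
  unfold normalizeOrSingle
  split_ifs with h
  · rw [Fintype.sum_eq_single a₀ fun a ha => by simp [ha]]
    simp
  · have hs : ‖(√(∑ a, ‖φ a‖ ^ 2) : ℂ)⁻¹‖ ^ 2 = (∑ a, ‖φ a‖ ^ 2)⁻¹ := by
      rw [norm_inv, inv_pow, Complex.norm_real, Real.norm_of_nonneg (Real.sqrt_nonneg _),
        Real.sq_sqrt (by positivity)]
    simp_rw [Pi.smul_apply, smul_eq_mul, norm_mul, mul_pow, ← Finset.mul_sum, hs]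
    exact inv_mul_cancel₀ h

theorem sqrt_sum_norm_sq_mul_normalizeOrSingle (a₀ : α) (φ : α → ℂ) (a : α) :
    (√(∑ a, ‖φ a‖ ^ 2) : ℂ) * normalizeOrSingle a₀ φ a = φ a := by
  unfold normalizeOrSingle
  split_ifs with h
  · have hφ : φ a = 0 := by
      simpa using (Finset.sum_eq_zero_iff_of_nonneg fun a _ => by positivity).mp h a (mem_univ a)
    simp [h, hφ]
  · have hs : (√(∑ a, ‖φ a‖ ^ 2) : ℂ) ≠ 0 := by
      rw [Complex.ofReal_ne_zero, Real.sqrt_ne_zero (by positivity)]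
      exact h
    rw [Pi.smul_apply, smul_eq_mul, mul_inv_cancel_left₀ hs]

end Normalize

theorem lcqnn_expressivity_general (m n : ℕ)
    (ψ : Fin (2 ^ n) × Fin (2 ^ m) → ℂ)
    (hψ : ∑ x, ‖ψ x‖ ^ 2 = 1) :
    ∃ (p : Fin (2 ^ m) → ℝ) (ψj : Fin (2 ^ m) → Fin (2 ^ n) → ℂ)
      (V : Matrix (Fin (2 ^ m)) (Fin (2 ^ m)) ℂ)
      (U : Fin (2 ^ m) → Matrix (Fin (2 ^ n)) (Fin (2 ^ n)) ℂ),
      (∀ j, 0 ≤ p j) ∧ (∑ j, p j = 1) ∧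
      (∀ j, ∑ a, ‖ψj j a‖ ^ 2 = 1) ∧
      (∀ x : Fin (2 ^ n) × Fin (2 ^ m),
        ψ x = (Real.sqrt (p x.2) : ℂ) * ψj x.2 x.1) ∧
      V ∈ Matrix.unitaryGroup (Fin (2 ^ m)) ℂ ∧
      (∀ j, U j ∈ Matrix.unitaryGroup (Fin (2 ^ n)) ℂ) ∧
      ((List.ofFn fun j : Fin (2 ^ m) =>
            Matrix.blockDiagonal (fun i => if i = j then U j else 1)).prod *
          ((1 : Matrix (Fin (2 ^ n)) (Fin (2 ^ n)) ℂ) ⊗ₖ V)) *ᵥ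
          (fun x : Fin (2 ^ n) × Fin (2 ^ m) =>
            if (x.1 : ℕ) = 0 ∧ (x.2 : ℕ) = 0 then (1 : ℂ) else 0) = ψ := by
  set p : Fin (2 ^ m) → ℝ := fun j => ∑ a, ‖ψ (a, j)‖ ^ 2
  set ψj : Fin (2 ^ m) → Fin (2 ^ n) → ℂ := fun j => normalizeOrSingle 0 fun a => ψ (a, j)
  have hp : ∀ j, 0 ≤ p j := fun j => by positivity
  have hp_sum : ∑ j, p j = 1 := by rw [← hψ, Fintype.sum_prod_type_right]
  have hψ_eq : ∀ x, ψ x = (√(p x.2) : ℂ) * ψj x.2 x.1 := fun x =>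
    (sqrt_sum_norm_sq_mul_normalizeOrSingle 0 (fun a => ψ (a, x.2)) x.1).symm
  obtain ⟨V, hV, hV_col⟩ := exists_mem_unitaryGroup_col_eq 0 (fun j => (√(p j) : ℂ)) <| by
    simpa only [Complex.norm_real, Real.norm_of_nonneg (Real.sqrt_nonneg _),
      Real.sq_sqrt (hp _)] using hp_sum
  choose U hU hU_col using fun j => exists_mem_unitaryGroup_col_eq 0 (ψj j)
    (sum_norm_sq_normalizeOrSingle _ _)
  refine ⟨p, ψj, V, U, hp, hp_sum, fun j => sum_norm_sq_normalizeOrSingle _ _, hψ_eq, hV, hU, ?_⟩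
  have h_init : (fun x : Fin (2 ^ n) × Fin (2 ^ m) =>
      if (x.1 : ℕ) = 0 ∧ (x.2 : ℕ) = 0 then (1 : ℂ) else 0) = Pi.single (0, 0) 1 := by
    funext x
    simp only [Pi.single_apply, Prod.ext_iff, Fin.ext_iff, Fin.val_zero]
  simp_rw [← Pi.mulSingle_apply, prod_ofFn_blockDiagonal_mulSingle, h_init,
    blockDiagonal_mul_one_kronecker_mulVec_single]
  funext x
  rw [← col_apply (U x.2), hU_col, ← col_apply V, hV_col, hψ_eq, mul_comm]

/-- every pure state on `m + n` qubits decomposes as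
`Σ_j √p_j |j⟩ ⊗ |ψ_j⟩` and can be prepared as `W|0⟩` by an LCQNN
`W = (Π_j C-U_j)(V ⊗ I)`.  Indices ordered as (working, control). -/
theorem lcqnn_expressivity (m n : ℕ) (hm : 1 ≤ m) (hn : 1 ≤ n)
    (ψ : Fin (2 ^ n) × Fin (2 ^ m) → ℂ)
    (hψ : ∑ x, ‖ψ x‖ ^ 2 = 1) :
    ∃ (p : Fin (2 ^ m) → ℝ) (ψj : Fin (2 ^ m) → Fin (2 ^ n) → ℂ)
      (V : Matrix (Fin (2 ^ m)) (Fin (2 ^ m)) ℂ)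
      (U : Fin (2 ^ m) → Matrix (Fin (2 ^ n)) (Fin (2 ^ n)) ℂ),
      (∀ j, 0 ≤ p j) ∧ (∑ j, p j = 1) ∧
      (∀ j, ∑ a, ‖ψj j a‖ ^ 2 = 1) ∧
      (∀ x : Fin (2 ^ n) × Fin (2 ^ m),
        ψ x = (Real.sqrt (p x.2) : ℂ) * ψj x.2 x.1) ∧
      V ∈ Matrix.unitaryGroup (Fin (2 ^ m)) ℂ ∧
      (∀ j, U j ∈ Matrix.unitaryGroup (Fin (2 ^ n)) ℂ) ∧
      ((List.ofFn fun j : Fin (2 ^ m) =>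
            Matrix.blockDiagonal (fun i => if i = j then U j else 1)).prod *
          ((1 : Matrix (Fin (2 ^ n)) (Fin (2 ^ n)) ℂ) ⊗ₖ V)) *ᵥ
          (fun x : Fin (2 ^ n) × Fin (2 ^ m) =>
            if (x.1 : ℕ) = 0 ∧ (x.2 : ℕ) = 0 then (1 : ℂ) else 0) = ψ :=
  lcqnn_expressivity_general m n ψ hψ
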